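/- Let G be a P_6-free graph with a maximal tripod T = (A_1, A_2, A_3) such that no vertex of G has neighbors in all three classes of T. Then the graph G' obtained from G by contracting T is P_6-free. -/

import Mathlib

/-- `(A 0, A 1, A 2)` is a tripod in `G` with ordering `v : Fin k → V`:
disjoint stable sets covering `{v 0, ..., v (k-1)}`, with `v i ∈ A i` for
`i = 0,1,2`, the root `v 0, v 1, v 2` a triangle, and every vertex `v j` with
`j ≥ 3` having earlier neighbors in both classes other than its own. -/
def IsTripod {V : Type*} (G : SimpleGraph V) (A : Fin 3 → Set V)
    (k : ℕ) (v : Fin k → V) : Prop :=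
  3 ≤ k ∧
  Function.Injective v ∧
  (∀ i j : Fin 3, i ≠ j → Disjoint (A i) (A j)) ∧
  (∀ i : Fin 3, ∀ a ∈ A i, ∀ b ∈ A i, ¬ G.Adj a b) ∧
  ((⋃ i, A i) = Set.range v) ∧
  (∀ i : Fin 3, ∀ hi : (i : ℕ) < k, v ⟨i, hi⟩ ∈ A i) ∧
  (∀ (h0 : 0 < k) (h1 : 1 < k) (h2 : 2 < k),
    G.Adj (v ⟨0, h0⟩) (v ⟨1, h1⟩) ∧ G.Adj (v ⟨0, h0⟩) (v ⟨2, h2⟩) ∧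
      G.Adj (v ⟨1, h1⟩) (v ⟨2, h2⟩)) ∧
  (∀ j : Fin k, 3 ≤ (j : ℕ) → ∀ i : Fin 3, v j ∈ A i →
    ∀ i' : Fin 3, i' ≠ i →
      ∃ j' : Fin k, (j' : ℕ) < (j : ℕ) ∧ v j' ∈ A i' ∧ G.Adj (v j) (v j'))

/-- The sets `(A 0, A 1, A 2)` form a tripod in `G` for some ordering. -/
def IsTripodSets {V : Type*} (G : SimpleGraph V) (A : Fin 3 → Set V) : Prop :=
  ∃ (k : ℕ) (v : Fin k → V), IsTripod G A k v

/-- A maximal tripod: no vertex can be added to any class so that the result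
is still a tripod. -/
def MaximalTripod {V : Type*} (G : SimpleGraph V) (A : Fin 3 → Set V) : Prop :=
  IsTripodSets G A ∧
  ∀ x : V, x ∉ (⋃ i, A i) → ∀ i : Fin 3,
    ¬ IsTripodSets G (Function.update A i (insert x (A i)))
/-- The graph obtained from `G` by contracting the tripod `(A 0, A 1, A 2)`:
each class `A i` is identified to a single vertex (the `Sum.inr i` vertices),
adjacent to the union of the neighborhoods of the vertices of `A i`, with the
three contracted vertices forming a triangle. -/
def contractTripod {V : Type*} (G : SimpleGraph V) (A : Fin 3 → Set V) :
    SimpleGraph ({x : V // x ∉ ⋃ i, A i} ⊕ Fin 3) where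
  Adj x y :=
    match x, y with
    | Sum.inl a, Sum.inl b => G.Adj a.1 b.1
    | Sum.inl a, Sum.inr i => ∃ w ∈ A i, G.Adj a.1 w
    | Sum.inr i, Sum.inl b => ∃ w ∈ A i, G.Adj w b.1
    | Sum.inr i, Sum.inr j => i ≠ j
  symm := by
    constructor
    rintro (a | i) (b | j) h
    · exact h.symm
    · obtain ⟨w, hw, hadj⟩ := h
      exact ⟨w, hw, hadj.symm⟩
    · obtain ⟨w, hw, hadj⟩ := h
      exact ⟨w, hw, hadj.symm⟩
    · exact h.symm
  loopless := by
    constructor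
    rintro (a | i) h
    · exact G.irrefl h
    · exact h rfl

/-!
A vertex outside a maximal tripod has neighbours in at most one class: one with neighbours in
exactly two classes could be added to the third, and none has neighbours in all three.
An induced `P₆` of the contraction contains at most two contracted vertices, and these are
consecutive. Each contracted vertex `aᵢ` is expanded back into the tripod: into a single vertex of
`Aᵢ` adjacent to both path-neighbours of `aᵢ` if there is one (a contracted pair at an end of the
path into an edge between the two classes), and otherwise into a shortest path between the
path-neighbours inside the union of two classes, which is connected in a tripod. The one-class
property keeps the expanded path induced, and it has at least six vertices, so `G` would contain
an induced `P₆`.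
-/

namespace SimpleGraph

variable {V W : Type*} {G : SimpleGraph V} {H : SimpleGraph W}

def pathGraphShift {m n : ℕ} (a : ℕ) (h : a + m ≤ n) : pathGraph m ↪g pathGraph n where
  toFun i := ⟨a + i, by omega⟩
  inj' i j hij := by simpa [Fin.ext_iff] using hij
  map_rel_iff' {i j} := by
    change (pathGraph n).Adj ⟨a + i, _⟩ ⟨a + j, _⟩ ↔ _
    simp only [pathGraph_adj]
    omega

def pathGraphRevIso (n : ℕ) : pathGraph n ≃g pathGraph n where
  toEquiv := Fin.revPerm
  map_rel_iff' {i j} := by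
    change (pathGraph n).Adj i.rev j.rev ↔ _
    simp only [pathGraph_adj, Fin.val_rev]
    omega

@[simp]
theorem pathGraphRevIso_apply {n : ℕ} (i : Fin n) : pathGraphRevIso n i = i.rev :=
  rfl

theorem isEmpty_pathGraph_embedding_of_le {m n : ℕ} (h : IsEmpty (pathGraph m ↪g G))
    (hmn : m ≤ n) : IsEmpty (pathGraph n ↪g G) :=
  ⟨fun f => h.false (f.comp (pathGraphShift 0 (by omega)))⟩

def pathGraphOneEmbedding (x : V) : pathGraph 1 ↪g G where
  toFun _ := x
  inj' := Function.injective_of_subsingleton _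
  map_rel_iff' {i j} := by simp [Subsingleton.elim i j]

@[simp]
theorem pathGraphOneEmbedding_apply (x : V) (i : Fin 1) :
    (pathGraphOneEmbedding x : pathGraph 1 ↪g G) i = x :=
  rfl

def pathGraphTwoEmbedding {x y : V} (h : G.Adj x y) : pathGraph 2 ↪g G where
  toFun := ![x, y]
  inj' i j hij := by
    fin_cases i <;> fin_cases j <;> simp_all [h.ne, h.ne.symm]
  map_rel_iff' {i j} := by
    change G.Adj (![x, y] i) (![x, y] j) ↔ _
    fin_cases i <;> fin_cases j <;> simp [pathGraph_adj, h, h.symm]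

@[simp]
theorem pathGraphTwoEmbedding_apply {x y : V} (h : G.Adj x y) (i : Fin 2) :
    pathGraphTwoEmbedding h i = ![x, y] i :=
  rfl

def Embedding.pathGraphAppend {m n : ℕ} (f : pathGraph m ↪g G) (g : pathGraph n ↪g G)
    (hne : ∀ i j, f i ≠ g j) (hadj : ∀ i j, G.Adj (f i) (g j) ↔ (i : ℕ) + 1 = m ∧ (j : ℕ) = 0) :
    pathGraph (m + n) ↪g G where
  toFun := Fin.append f g
  inj' i j hij := by
    induction i using Fin.addCases <;> induction j using Fin.addCases <;>
      simp only [Fin.append_left, Fin.append_right] at hij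
    · rw [f.injective hij]
    · exact absurd hij (hne _ _)
    · exact absurd hij.symm (hne _ _)
    · rw [g.injective hij]
  map_rel_iff' {i j} := by
    change G.Adj (Fin.append f g i) (Fin.append f g j) ↔ _
    induction i using Fin.addCases <;> induction j using Fin.addCases <;>
      simp only [Fin.append_left, Fin.append_right, f.map_adj_iff, g.map_adj_iff, hadj,
        G.adj_comm (g _) (f _), pathGraph_adj, Fin.val_castAdd, Fin.val_natAdd] <;>
      omega

@[simp]
theorem Embedding.pathGraphAppend_apply {m n : ℕ} (f : pathGraph m ↪g G) (g : pathGraph n ↪g G)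
    (hne) (hadj) (i : Fin (m + n)) : f.pathGraphAppend g hne hadj i = Fin.append f g i :=
  rfl

theorem nonempty_pathGraph_embedding_append₃ {m n l : ℕ} (f : pathGraph m ↪g G)
    (g : pathGraph (n + 1) ↪g G) (h : pathGraph l ↪g G)
    (hfg : ∀ i j, f i ≠ g j) (hfg' : ∀ i j, G.Adj (f i) (g j) ↔ (i : ℕ) + 1 = m ∧ (j : ℕ) = 0)
    (hgh : ∀ j k, g j ≠ h k) (hgh' : ∀ j k, G.Adj (g j) (h k) ↔ (j : ℕ) = n ∧ (k : ℕ) = 0)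
    (hfh : ∀ i k, f i ≠ h k) (hfh' : ∀ i k, ¬ G.Adj (f i) (h k)) :
    Nonempty (pathGraph (m + (n + 1) + l) ↪g G) := by
  refine ⟨(f.pathGraphAppend g hfg hfg').pathGraphAppend h ?_ ?_⟩ <;> intro i k <;>
    induction i using Fin.addCases <;>
    simp only [Embedding.pathGraphAppend_apply, Fin.append_left, Fin.append_right,
      Fin.val_castAdd, Fin.val_natAdd]
  · exact hfh _ _
  · exact hgh _ _
  · simp only [hfh', false_iff]
    omega
  · rw [hgh']
    omega

theorem Walk.exists_pathGraph_embedding_of_forall_length_le {s t : W} (p : H.Walk s t)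
    (hmin : ∀ q : H.Walk s t, p.length ≤ q.length) :
    ∃ f : pathGraph (p.length + 1) ↪g H, ∀ i, f i = p.getVert i := by
  -- a repeated vertex or a chord of `p` would give a shorter walk
  have hne {i j : ℕ} (hij : i < j) (hj : j ≤ p.length) : p.getVert i ≠ p.getVert j := fun h => by
    have := hmin ((p.take i).append ((p.drop j).copy h.symm rfl))
    simp only [Walk.length_append, Walk.take_length, Walk.length_copy, Walk.drop_length] at this
    omega
  have hnadj {i j : ℕ} (hij : i + 1 < j) (hj : j ≤ p.length) :
      ¬ H.Adj (p.getVert i) (p.getVert j) := fun h => by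
    have := hmin ((p.take i).append (.cons h (p.drop j)))
    simp only [Walk.length_append, Walk.take_length, Walk.length_cons, Walk.drop_length] at this
    omega
  refine ⟨⟨⟨fun i => p.getVert i, fun i j hij => ?_⟩, fun {i j} => ?_⟩, fun i => rfl⟩
  · rcases lt_trichotomy i j with h | h | h
    · exact absurd hij (hne h (by omega))
    · exact h
    · exact absurd hij.symm (hne h (by omega))
  · change H.Adj (p.getVert i) (p.getVert j) ↔ _
    rw [pathGraph_adj]
    refine ⟨fun h => ?_, ?_⟩
    · by_contra hc
      rcases lt_trichotomy (i : ℕ) j with hij | hij | hij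
      · exact hnadj (by omega) (by omega) h
      · exact H.irrefl (by rwa [Fin.ext hij] at h)
      · exact hnadj (by omega) (by omega) h.symm
    · rintro (h | h)
      · rw [← h]
        exact p.adj_getVert_succ (by omega)
      · rw [← h]
        exact (p.adj_getVert_succ (by omega)).symm

theorem Reachable.exists_pathGraph_embedding {S T : Set W} {s t : W} (hs : s ∈ S) (ht : t ∈ T)
    (hst : H.Reachable s t) :
    ∃ n, ∃ f : pathGraph (n + 1) ↪g H,
      (∀ i, f i ∈ S ↔ i = 0) ∧ (∀ i, f i ∈ T ↔ i = Fin.last n) := by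
  classical
  have hex : ∃ n, ∃ s ∈ S, ∃ t ∈ T, ∃ p : H.Walk s t, p.length = n :=
    ⟨_, s, hs, t, ht, hst.some, rfl⟩
  obtain ⟨s, hs, t, ht, p, hp⟩ := Nat.find_spec hex
  have hmin {s' t' : W} (hs' : s' ∈ S) (ht' : t' ∈ T) (q : H.Walk s' t') :
      p.length ≤ q.length :=
    hp ▸ Nat.find_min' hex ⟨s', hs', t', ht', q, rfl⟩
  obtain ⟨f, hf⟩ := p.exists_pathGraph_embedding_of_forall_length_le (hmin hs ht)
  refine ⟨p.length, f, fun i => ?_, fun i => ?_⟩ <;> rw [hf]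
  · refine ⟨fun h => ?_, fun h => by simpa [h] using hs⟩
    have := hmin h ht (p.drop i)
    rw [Walk.drop_length] at this
    rw [Fin.ext_iff, Fin.val_zero]
    omega
  · refine ⟨fun h => ?_, fun h => by simpa [h] using ht⟩
    have := hmin hs h (p.take i)
    rw [Walk.take_length] at this
    rw [Fin.ext_iff, Fin.val_last]
    omega

theorem exists_pathGraph_embedding_of_preconnected_induce {B S T : Set V}
    (hB : (G.induce B).Preconnected) (hSB : S ⊆ B) (hTB : T ⊆ B) (hS : S.Nonempty)
    (hT : T.Nonempty) :
    ∃ n, ∃ f : pathGraph (n + 1) ↪g G,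
      (∀ i, f i ∈ B) ∧ (∀ i, f i ∈ S ↔ i = 0) ∧ (∀ i, f i ∈ T ↔ i = Fin.last n) := by
  obtain ⟨s, hs⟩ := hS
  obtain ⟨t, ht⟩ := hT
  obtain ⟨n, f, hfS, hfT⟩ := (hB ⟨s, hSB hs⟩ ⟨t, hTB ht⟩).exists_pathGraph_embedding
    (S := {x | x.1 ∈ S}) (T := {x | x.1 ∈ T}) hs ht
  exact ⟨n, (Embedding.induce B).comp f, fun i => (f i).2, hfS, hfT⟩

end SimpleGraph

theorem Fin.exists_third_of_ne {c d : Fin 3} (hcd : c ≠ d) :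
    ∃ m, m ≠ c ∧ m ≠ d ∧ ∀ i, i = c ∨ i = d ∨ i = m := by
  revert c d
  decide

namespace Set

variable {ι V : Type*} [DecidableEq ι] {A : ι → Set V} {m : ι} {x y : V}

theorem subset_update_insert (i : ι) : A i ⊆ Function.update A m (insert x (A m)) i := by
  rcases eq_or_ne i m with rfl | him
  · simp
  · rw [Function.update_of_ne him]

theorem mem_of_mem_update_insert (hy : y ≠ x) {i : ι}
    (h : y ∈ Function.update A m (insert x (A m)) i) : y ∈ A i := by
  rcases eq_or_ne i m with rfl | him
  · simpa [hy] using h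
  · rwa [Function.update_of_ne him] at h

theorem eq_of_mem_update_insert (hx : x ∉ ⋃ i, A i) {i : ι}
    (h : x ∈ Function.update A m (insert x (A m)) i) : i = m := by
  by_contra him
  rw [Function.update_of_ne him] at h
  exact hx (mem_iUnion.mpr ⟨i, h⟩)

theorem iUnion_update_insert :
    ⋃ i, Function.update A m (insert x (A m)) i = insert x (⋃ i, A i) := by
  ext y
  simp only [mem_iUnion, mem_insert_iff]
  constructor
  · rintro ⟨i, hi⟩
    by_cases hyx : y = x
    exacts [.inl hyx, .inr ⟨i, mem_of_mem_update_insert hyx hi⟩]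
  · rintro (rfl | ⟨i, hi⟩)
    exacts [⟨m, by simp⟩, ⟨i, subset_update_insert i hi⟩]

theorem disjoint_update_insert (hx : x ∉ ⋃ i, A i) {i j : ι} (hij : i ≠ j)
    (hdisj : Disjoint (A i) (A j)) :
    Disjoint (Function.update A m (insert x (A m)) i) (Function.update A m (insert x (A m)) j) := by
  refine disjoint_left.mpr fun y hi hj => ?_
  by_cases hyx : y = x
  · subst hyx
    exact hij ((eq_of_mem_update_insert hx hi).trans (eq_of_mem_update_insert hx hj).symm)
  · exact disjoint_left.mp hdisj (mem_of_mem_update_insert hyx hi) (mem_of_mem_update_insert hyx hj)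

end Set

namespace IsTripod

open SimpleGraph

variable {V : Type*} {G : SimpleGraph V} {A : Fin 3 → Set V} {k : ℕ} {v : Fin k → V}

theorem three_le (h : IsTripod G A k v) : 3 ≤ k :=
  h.1

theorem disjoint (h : IsTripod G A k v) {i j : Fin 3} (hij : i ≠ j) : Disjoint (A i) (A j) :=
  h.2.2.1 i j hij

theorem not_adj (h : IsTripod G A k v) {i : Fin 3} {a b : V} (ha : a ∈ A i) (hb : b ∈ A i) :
    ¬ G.Adj a b :=
  h.2.2.2.1 i a ha b hb

theorem iUnion_eq_range (h : IsTripod G A k v) : ⋃ i, A i = Set.range v :=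
  h.2.2.2.2.1

theorem exists_lt_adj (h : IsTripod G A k v) {j : Fin k} (hj : 3 ≤ (j : ℕ)) {i i' : Fin 3}
    (hi : v j ∈ A i) (hi' : i' ≠ i) : ∃ j' < j, v j' ∈ A i' ∧ G.Adj (v j) (v j') :=
  h.2.2.2.2.2.2.2 j hj i hi i' hi'

def root (h : IsTripod G A k v) (i : Fin 3) : V :=
  v (Fin.castLE h.three_le i)

theorem root_mem (h : IsTripod G A k v) (i : Fin 3) : h.root i ∈ A i :=
  h.2.2.2.2.2.1 i _

theorem root_adj (h : IsTripod G A k v) {i j : Fin 3} (hij : i ≠ j) :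
    G.Adj (h.root i) (h.root j) := by
  have := h.three_le
  obtain ⟨h01, h02, h12⟩ := h.2.2.2.2.2.2.1 (by omega) (by omega) (by omega)
  fin_cases i <;> fin_cases j
  all_goals first | exact absurd rfl hij | assumption | exact SimpleGraph.Adj.symm ‹_›

theorem eq_castLE_of_mem (h : IsTripod G A k v) {j : Fin k} (hj : (j : ℕ) < 3) {i : Fin 3}
    (hi : v j ∈ A i) : j = Fin.castLE h.three_le i := by
  obtain rfl : i = ⟨j, hj⟩ := by
    by_contra hne
    exact Set.disjoint_left.mp (h.disjoint hne) hi (h.root_mem ⟨j, hj⟩)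
  rfl

theorem exists_adj (h : IsTripod G A k v) {i j : Fin 3} (hij : i ≠ j) {w : V} (hw : w ∈ A i) :
    ∃ w' ∈ A j, G.Adj w w' := by
  obtain ⟨l, rfl⟩ : w ∈ Set.range v := h.iUnion_eq_range ▸ Set.mem_iUnion.mpr ⟨i, hw⟩
  by_cases hl : 3 ≤ (l : ℕ)
  · obtain ⟨l', -, hl', hadj⟩ := h.exists_lt_adj hl hw hij.symm
    exact ⟨_, hl', hadj⟩
  · rw [h.eq_castLE_of_mem (by omega) hw]
    exact ⟨_, h.root_mem j, h.root_adj hij⟩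

theorem preconnected_induce_union (h : IsTripod G A k v) {a b : Fin 3} (hab : a ≠ b) :
    (G.induce (A a ∪ A b)).Preconnected := by
  let r : ↥(A a ∪ A b) := ⟨h.root a, .inl (h.root_mem a)⟩
  -- every vertex is joined to `r` through vertices that come earlier in the tripod order
  suffices hr : ∀ j (hj : v j ∈ A a ∪ A b), (G.induce (A a ∪ A b)).Reachable r ⟨v j, hj⟩ by
    have hrange (z : V) (hz : z ∈ A a ∪ A b) : z ∈ Set.range v :=
      h.iUnion_eq_range ▸ hz.elim (fun hz => Set.mem_iUnion.mpr ⟨a, hz⟩)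
        (fun hz => Set.mem_iUnion.mpr ⟨b, hz⟩)
    rintro ⟨x, hx⟩ ⟨y, hy⟩
    obtain ⟨i, rfl⟩ := hrange x hx
    obtain ⟨j, rfl⟩ := hrange y hy
    exact (hr i hx).symm.trans (hr j hy)
  intro j
  induction j using WellFoundedLT.induction with
  | _ j ih =>
  intro hj
  by_cases hj3 : 3 ≤ (j : ℕ)
  · obtain ⟨c, d, hcd, hc, hd⟩ : ∃ c d, c ≠ d ∧ v j ∈ A c ∧ A d ⊆ A a ∪ A b := by
      rcases hj with hj | hj
      · exact ⟨a, b, hab, hj, Set.subset_union_right⟩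
      · exact ⟨b, a, hab.symm, hj, Set.subset_union_left⟩
    obtain ⟨j', hlt, hj', hadj⟩ := h.exists_lt_adj hj3 hc hcd.symm
    exact (ih j' hlt (hd hj')).trans (SimpleGraph.Adj.reachable hadj.symm)
  · rcases hj with hja | hjb
    · obtain rfl := h.eq_castLE_of_mem (by omega) hja
      rfl
    · obtain rfl := h.eq_castLE_of_mem (by omega) hjb
      exact SimpleGraph.Adj.reachable (h.root_adj hab)

theorem snoc (h : IsTripod G A k v) {x : V} {m : Fin 3} (hx : x ∉ ⋃ i, A i)
    (hxm : ∀ w ∈ A m, ¬ G.Adj x w) (hxo : ∀ i, i ≠ m → ∃ w ∈ A i, G.Adj x w) :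
    IsTripod G (Function.update A m (insert x (A m))) (k + 1) (Fin.snoc v x) := by
  obtain ⟨h3, hinj, hdisj, hstab, hcov, hroots, htri, hstep⟩ := h
  have hxv : x ∉ Set.range v := hcov ▸ hx
  have hsnoc (i : ℕ) (hi : i < k) :
      (Fin.snoc v x : Fin (k + 1) → V) ⟨i, by omega⟩ = v ⟨i, hi⟩ :=
    Fin.snoc_castSucc (α := fun _ => V) x v ⟨i, hi⟩
  refine ⟨by omega, Fin.snoc_injective_of_injective hinj hxv,
    fun i j hij => Set.disjoint_update_insert hx hij (hdisj i j hij), fun i a ha b hb => ?_,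
    by rw [Set.iUnion_update_insert, hcov, Fin.range_snoc],
    fun i hi => ?_, fun h0 h1 h2 => ?_, fun j hj i hi i' hi' => ?_⟩
  · by_cases ha' : a = x <;> by_cases hb' : b = x
    · exact ha' ▸ hb' ▸ G.irrefl
    · obtain rfl : i = m := Set.eq_of_mem_update_insert hx (ha' ▸ ha)
      exact ha' ▸ hxm b (Set.mem_of_mem_update_insert hb' hb)
    · obtain rfl : i = m := Set.eq_of_mem_update_insert hx (hb' ▸ hb)
      exact hb' ▸ fun hab => hxm a (Set.mem_of_mem_update_insert ha' ha) hab.symm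
    · exact hstab i a (Set.mem_of_mem_update_insert ha' ha) b (Set.mem_of_mem_update_insert hb' hb)
  · rw [hsnoc i (by omega)]
    exact Set.subset_update_insert i (hroots i _)
  · simpa only [hsnoc _ (by omega : 0 < k), hsnoc _ (by omega : 1 < k),
      hsnoc _ (by omega : 2 < k)] using htri (by omega) (by omega) (by omega)
  induction j using Fin.lastCases with
  | last =>
    rw [Fin.snoc_last] at hi ⊢
    obtain rfl : i = m := Set.eq_of_mem_update_insert hx hi
    obtain ⟨w, hw, hadj⟩ := hxo i' hi'
    obtain ⟨j', rfl⟩ : w ∈ Set.range v := hcov ▸ Set.mem_iUnion.mpr ⟨i', hw⟩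
    refine ⟨j'.castSucc, Fin.castSucc_lt_last j', ?_, ?_⟩ <;> rw [Fin.snoc_castSucc]
    exacts [Set.subset_update_insert i' hw, hadj]
  | cast j =>
    rw [Fin.snoc_castSucc] at hi ⊢
    obtain ⟨j', hlt, hj', hadj⟩ :=
      hstep j (by simpa using hj) i (Set.mem_of_mem_update_insert (fun h => hxv ⟨j, h⟩) hi) i' hi'
    refine ⟨j'.castSucc, Fin.castSucc_lt_castSucc_iff.mpr hlt, ?_, ?_⟩ <;> rw [Fin.snoc_castSucc]
    exacts [Set.subset_update_insert i' hj', hadj]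

theorem exists_pathGraph_embedding_adj_iff (htri : IsTripod G A k v) {c d : Fin 3}
    (hcd : c ≠ d) {x y : V} (hx : ∃ w ∈ A c ∪ A d, G.Adj x w) (hy : ∃ w ∈ A c ∪ A d, G.Adj y w) :
    ∃ n, ∃ U : pathGraph (n + 1) ↪g G, (∀ t, U t ∈ A c ∪ A d) ∧
      (∀ t, G.Adj x (U t) ↔ t = 0) ∧ (∀ t, G.Adj y (U t) ↔ t = Fin.last n) := by
  obtain ⟨n, U, hUB, hUS, hUT⟩ := exists_pathGraph_embedding_of_preconnected_induce
    (htri.preconnected_induce_union hcd) (S := {w | w ∈ A c ∪ A d ∧ G.Adj x w})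
    (T := {w | w ∈ A c ∪ A d ∧ G.Adj y w}) (fun w hw => hw.1) (fun w hw => hw.1) hx hy
  exact ⟨n, U, hUB, fun t => ⟨fun h => (hUS t).mp ⟨hUB t, h⟩, fun h => ((hUS t).mpr h).2⟩,
    fun t => ⟨fun h => (hUT t).mp ⟨hUB t, h⟩, fun h => ((hUT t).mpr h).2⟩⟩

end IsTripod

theorem MaximalTripod.eq_of_exists_adj {V : Type*} {G : SimpleGraph V} {A : Fin 3 → Set V}
    (hmax : MaximalTripod G A)
    (hno : ∀ x : V, x ∉ (⋃ i, A i) → ¬ ∀ i : Fin 3, ∃ w ∈ A i, G.Adj x w)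
    {x : V} (hx : x ∉ ⋃ i, A i) {c d : Fin 3} (hc : ∃ w ∈ A c, G.Adj x w)
    (hd : ∃ w ∈ A d, G.Adj x w) : c = d := by
  by_contra hcd
  obtain ⟨m, hmc, hmd, hall⟩ := Fin.exists_third_of_ne hcd
  obtain ⟨k, v, h⟩ := hmax.1
  by_cases hm : ∃ w ∈ A m, G.Adj x w
  · exact hno x hx fun i => by rcases hall i with rfl | rfl | rfl <;> assumption
  · push Not at hm
    refine hmax.2 x hx m ⟨k + 1, _, h.snoc hx hm fun i hi => ?_⟩
    rcases hall i with rfl | rfl | rfl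
    exacts [hc, hd, absurd rfl hi]

namespace contractTripod

open SimpleGraph Function

variable {V W : Type*} {G : SimpleGraph V} {A : Fin 3 → Set V} {H : SimpleGraph W}

theorem adj_iff_of_eq_inl_of_eq_inl (e : H ↪g contractTripod G A) {p q : W}
    {a b : {x : V // x ∉ ⋃ i, A i}} (hp : e p = .inl a) (hq : e q = .inl b) :
    G.Adj a b ↔ H.Adj p q := by
  rw [← e.map_adj_iff, hp, hq]
  rfl

theorem exists_adj_iff_of_eq_inl_of_eq_inr (e : H ↪g contractTripod G A) {p q : W}
    {a : {x : V // x ∉ ⋃ i, A i}} {c : Fin 3} (hp : e p = .inl a) (hq : e q = .inr c) :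
    (∃ w ∈ A c, G.Adj a w) ↔ H.Adj p q := by
  rw [← e.map_adj_iff, hp, hq]
  rfl

theorem adj_of_eq_inr_of_eq_inr (e : H ↪g contractTripod G A) {p q : W} {c d : Fin 3}
    (hp : e p = .inr c) (hq : e q = .inr d) (hpq : p ≠ q) : H.Adj p q := by
  rw [← e.map_adj_iff, hp, hq]
  exact fun hcd => hpq (e.injective (by rw [hp, hq, hcd]))

theorem val_ne_of_eq_inl_of_eq_inl (e : H ↪g contractTripod G A) {p q : W}
    {a b : {x : V // x ∉ ⋃ i, A i}} (hp : e p = .inl a) (hq : e q = .inl b) (hpq : p ≠ q) :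
    a.1 ≠ b.1 :=
  fun h => hpq (e.injective (by rw [hp, hq, Subtype.ext h]))

theorem exists_embedding_of_forall_eq_inl (e : H ↪g contractTripod G A)
    (he : ∀ p, ∃ a, e p = .inl a) : ∃ f : H ↪g G, ∀ p, ∃ hp, e p = .inl ⟨f p, hp⟩ := by
  choose a ha using he
  exact ⟨⟨⟨fun p => a p, fun p q h => e.injective (by rw [ha, ha, Subtype.ext h])⟩,
    adj_iff_of_eq_inl_of_eq_inl e (ha _) (ha _)⟩, fun p => ⟨(a p).2, ha p⟩⟩

theorem nonempty_embedding_of_representatives (e : H ↪g contractTripod G A)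
    (hdisj : Pairwise (Disjoint on A)) {φ : Fin 3 → V} (hφ : ∀ c, φ c ∈ A c)
    (hl : ∀ p q a c, H.Adj p q → e p = .inl a → e q = .inr c → G.Adj a (φ c))
    (hr : ∀ p q c d, H.Adj p q → e p = .inr c → e q = .inr d → G.Adj (φ c) (φ d)) :
    Nonempty (H ↪g G) := by
  have hφinj : Function.Injective φ := fun c d h => by
    by_contra hcd
    exact Set.disjoint_left.mp (hdisj hcd) (hφ c) (h ▸ hφ d)
  have hs : Function.Injective (Sum.elim Subtype.val φ : _ → V) :=
    Subtype.val_injective.sumElim hφinj fun (a : {x : V // x ∉ ⋃ i, A i}) c h =>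
      a.2 (Set.mem_iUnion.mpr ⟨c, h ▸ hφ c⟩)
  refine ⟨⟨⟨fun p => Sum.elim Subtype.val φ (e p), hs.comp e.injective⟩, fun {p q} => ?_⟩⟩
  change G.Adj (Sum.elim Subtype.val φ (e p)) (Sum.elim Subtype.val φ (e q)) ↔ _
  rw [← e.map_adj_iff]
  rcases hp : e p with a | c <;> rcases hq : e q with b | d <;>
    simp only [Sum.elim_inl, Sum.elim_inr]
  · rfl
  · exact ⟨fun h => ⟨φ d, hφ d, h⟩, fun h => hl p q a d (e.map_adj_iff.mp (hp ▸ hq ▸ h)) hp hq⟩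
  · exact ⟨fun h => ⟨φ c, hφ c, h⟩,
      fun h => (hl q p b c (e.map_adj_iff.mp (hp ▸ hq ▸ h)).symm hq hp).symm⟩
  · exact ⟨fun h hcd => G.irrefl (hcd ▸ h),
      fun h => hr p q c d (e.map_adj_iff.mp (hp ▸ hq ▸ h)) hp hq⟩

theorem pathGraph_embedding_cases {n : ℕ} (e : pathGraph n ↪g contractTripod G A) :
    (∀ p, ∃ a, e p = .inl a) ∨
    (∃ m c, e m = .inr c ∧ ∀ p, p ≠ m → ∃ a, e p = .inl a) ∨
    (∃ (p q : Fin n) (i j : Fin 3), (p : ℕ) + 1 = q ∧ e p = .inr i ∧ e q = .inr j ∧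
      ∀ r, r ≠ p → r ≠ q → ∃ a, e r = .inl a) := by
  have hsum (p : Fin n) : (∃ a, e p = .inl a) ∨ ∃ c, e p = .inr c := by
    rcases e p with a | c
    exacts [.inl ⟨a, rfl⟩, .inr ⟨c, rfl⟩]
  by_cases h0 : ∀ p, ∃ a, e p = .inl a
  · exact .inl h0
  push Not at h0
  obtain ⟨p₀, hp₀⟩ := h0
  obtain ⟨c₀, hc₀⟩ := (hsum p₀).resolve_left fun ⟨a, ha⟩ => hp₀ a ha
  by_cases h1 : ∀ p, p ≠ p₀ → ∃ a, e p = .inl a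
  · exact .inr (.inl ⟨p₀, c₀, hc₀, h1⟩)
  push Not at h1
  obtain ⟨p₁, hp₁₀, hp₁⟩ := h1
  obtain ⟨c₁, hc₁⟩ := (hsum p₁).resolve_left fun ⟨a, ha⟩ => hp₁ a ha
  have h01 := pathGraph_adj.mp (adj_of_eq_inr_of_eq_inr e hc₀ hc₁ hp₁₀.symm)
  -- the contracted vertices form a triangle, so a path meets at most two of them
  have hthird (r : Fin n) (hr₀ : r ≠ p₀) (hr₁ : r ≠ p₁) : ∃ a, e r = .inl a := by
    refine (hsum r).resolve_right fun ⟨c, hc⟩ => ?_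
    have h0 := pathGraph_adj.mp (adj_of_eq_inr_of_eq_inr e hc hc₀ hr₀)
    have h1 := pathGraph_adj.mp (adj_of_eq_inr_of_eq_inr e hc hc₁ hr₁)
    omega
  rcases h01 with h01 | h10
  · exact .inr (.inr ⟨p₀, p₁, c₀, c₁, h01, hc₀, hc₁, hthird⟩)
  · exact .inr (.inr ⟨p₁, p₀, c₁, c₀, h10, hc₁, hc₀, fun r h1 h0 => hthird r h0 h1⟩)

theorem exists_segment_embedding {n : ℕ} (e : pathGraph n ↪g contractTripod G A) (a l : ℕ)
    (hal : a + l ≤ n) (he : ∀ r : Fin l, ∃ x, e ⟨a + r, by omega⟩ = .inl x) :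
    ∃ f : pathGraph l ↪g G, ∀ r : Fin l, ∃ hr, e ⟨a + r, by omega⟩ = .inl ⟨f r, hr⟩ :=
  exists_embedding_of_forall_eq_inl (e.comp (pathGraphShift a hal)) he

theorem false_of_no_common_adj (hmax : MaximalTripod G A)
    (hno : ∀ x : V, x ∉ (⋃ i, A i) → ¬ ∀ i : Fin 3, ∃ w ∈ A i, G.Adj x w)
    (hP6 : IsEmpty (pathGraph 6 ↪g G)) {c : Fin 3} {xa xb xo : V}
    (hxa : xa ∉ ⋃ i, A i) (hxb : xb ∉ ⋃ i, A i) (hxo : xo ∉ ⋃ i, A i)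
    (ha : ∃ w ∈ A c, G.Adj xa w) (hb : ∃ w ∈ A c, G.Adj xb w)
    (hab : ∀ w ∈ A c, G.Adj xa w → ¬ G.Adj xb w) (ho : ∀ w ∈ A c, ¬ G.Adj xo w)
    (hbo : G.Adj xb xo) (hnab : ¬ G.Adj xa xb) (hnao : ¬ G.Adj xa xo) (hneab : xa ≠ xb)
    (hneao : xa ≠ xo) : False := by
  obtain ⟨k, v, htri⟩ := hmax.1
  obtain ⟨d, hdc, hod⟩ : ∃ d, d ≠ c ∧ ∀ w ∈ A d, ¬ G.Adj xo w := by
    have hc1 : c + 1 ≠ c := (by decide : ∀ c : Fin 3, c + 1 ≠ c) c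
    obtain ⟨d, hdc, hdc', -⟩ := Fin.exists_third_of_ne hc1
    by_contra! h
    exact hdc (hmax.eq_of_exists_adj hno hxo (h d hdc') (h (c + 1) hc1))
  obtain ⟨n, U, hUB, hUa, hUb⟩ := htri.exists_pathGraph_embedding_adj_iff hdc.symm
    (ha.imp fun _ hw => ⟨.inl hw.1, hw.2⟩) (hb.imp fun _ hw => ⟨.inl hw.1, hw.2⟩)
  have hUc {x : V} (hx : x ∉ ⋃ i, A i) (hxc : ∃ w ∈ A c, G.Adj x w) {t : Fin (n + 1)}
      (h : G.Adj x (U t)) : U t ∈ A c :=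
    (hUB t).resolve_right fun hd => hdc (hmax.eq_of_exists_adj hno hx ⟨_, hd, h⟩ hxc)
  have hUreal {x : V} (hx : x ∉ ⋃ i, A i) (t : Fin (n + 1)) : x ≠ U t := by
    rintro rfl
    exact (hUB t).elim (fun h => hx (Set.mem_iUnion.mpr ⟨c, h⟩))
      fun h => hx (Set.mem_iUnion.mpr ⟨d, h⟩)
  have hn : 2 ≤ n := by
    by_contra! hn
    have ha0 := (hUa 0).mpr rfl
    have hbn := (hUb (Fin.last n)).mpr rfl
    interval_cases n
    · exact hab _ (hUc hxa ha ha0) ha0 hbn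
    · exact htri.not_adj (hUc hxa ha ha0) (hUc hxb hb hbn)
        (U.map_adj_iff.mpr (by simp [pathGraph_adj]))
  refine (isEmpty_pathGraph_embedding_of_le hP6 (by omega : 6 ≤ 1 + (n + 1) + 2)).false
    (nonempty_pathGraph_embedding_append₃ (pathGraphOneEmbedding xa) U
      (pathGraphTwoEmbedding hbo) (fun _ t => hUreal hxa t) (fun i t => ?_)
      (fun t s => ?_) (fun t s => ?_) (fun _ s => ?_) (fun _ s => ?_)).some
  · rw [pathGraphOneEmbedding_apply, hUa, Fin.ext_iff, Fin.val_zero]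
    omega
  all_goals fin_cases s
  · exact (hUreal hxb t).symm
  · exact (hUreal hxo t).symm
  · simp [G.adj_comm _ xb, hUb, Fin.ext_iff]
  · simpa [G.adj_comm _ xo] using (hUB t).elim (ho _) (hod _)
  exacts [hneab, hneao, hnab, hnao]

theorem false_of_exists_common_adj {k n : ℕ} {v : Fin k → V} (htri : IsTripod G A k v)
    (hPn : IsEmpty (pathGraph n ↪g G)) (e : pathGraph n ↪g contractTripod G A) {m : Fin n}
    {c : Fin 3} (hm : e m = .inr c) (hreal : ∀ p, p ≠ m → ∃ a, e p = .inl a) {w : V}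
    (hw : w ∈ A c) (hwadj : ∀ p a, (pathGraph n).Adj p m → e p = .inl a → G.Adj a w) :
    False := by
  have hpos {p : Fin n} {d : Fin 3} (hp : e p = .inr d) : p = m ∧ d = c := by
    by_cases hpm : p = m
    · subst hpm
      exact ⟨rfl, Sum.inr_injective (hp.symm.trans hm)⟩
    · obtain ⟨a, ha⟩ := hreal p hpm
      exact absurd (ha.symm.trans hp) Sum.inl_ne_inr
  have hφ (d : Fin 3) : Function.update htri.root c w d ∈ A d := by
    rcases eq_or_ne d c with rfl | hd
    · simpa using hw
    · simpa [hd] using htri.root_mem d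
  refine hPn.false (nonempty_embedding_of_representatives e (fun _ _ => htri.disjoint) hφ
    (fun p q a d hpq hp hq => ?_) (fun p q d d' hpq hp hq => ?_)).some
  · obtain ⟨rfl, rfl⟩ := hpos hq
    simpa using hwadj p a hpq hp
  · obtain ⟨rfl, -⟩ := hpos hp
    obtain ⟨rfl, -⟩ := hpos hq
    exact absurd hpq (pathGraph n).irrefl

theorem false_of_one_contracted (hmax : MaximalTripod G A)
    (hno : ∀ x : V, x ∉ (⋃ i, A i) → ¬ ∀ i : Fin 3, ∃ w ∈ A i, G.Adj x w)
    (hP6 : IsEmpty (pathGraph 6 ↪g G)) (e : pathGraph 6 ↪g contractTripod G A) {m : Fin 6}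
    {c : Fin 3} (hm : e m = .inr c) (hreal : ∀ p, p ≠ m → ∃ a, e p = .inl a) : False := by
  wlog hm2 : (m : ℕ) ≤ 2 generalizing e m
  · refine this (e.comp (pathGraphRevIso 6).toEmbedding) (m := m.rev) (by simpa using hm)
      (fun p hp => ?_) (by rw [Fin.val_rev]; omega)
    simpa using hreal p.rev (by rintro rfl; simp at hp)
  obtain ⟨k, v, htri⟩ := hmax.1
  obtain ⟨b, hb⟩ := hreal ⟨m + 1, by omega⟩ (by simp only [Ne, Fin.ext_iff]; omega)
  obtain ⟨o, ho⟩ := hreal ⟨m + 2, by omega⟩ (by simp only [Ne, Fin.ext_iff]; omega)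
  have hbm := (exists_adj_iff_of_eq_inl_of_eq_inr e hb hm).mpr (by simp [pathGraph_adj])
  by_cases hcommon : ∃ w ∈ A c, ∀ p a, (pathGraph 6).Adj p m → e p = .inl a → G.Adj a w
  · obtain ⟨w, hw, hwadj⟩ := hcommon
    exact false_of_exists_common_adj htri hP6 e hm hreal hw hwadj
  have hnbr {p : Fin 6} {x} (hp : (pathGraph 6).Adj p m) (hpx : e p = .inl x) :
      e ⟨m - 1, by omega⟩ = .inl x ∨ x = b := by
    rw [pathGraph_adj] at hp
    rcases hp with hp | hp
    · exact .inl (by rwa [show p = ⟨m - 1, by omega⟩ from Fin.ext (by simp only; omega)] at hpx)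
    · rw [show p = ⟨m + 1, by omega⟩ from Fin.ext (by simp only; omega), hb] at hpx
      exact .inr (Sum.inl_injective hpx).symm
  have hm0 : (m : ℕ) ≠ 0 := by
    intro hm0
    obtain ⟨w, hw, hbw⟩ := hbm
    refine hcommon ⟨w, hw, fun p x hp hpx => ?_⟩
    obtain hx | rfl := hnbr hp hpx
    · rw [show (⟨m - 1, _⟩ : Fin 6) = m from Fin.ext (by simp only; omega), hm] at hx
      exact absurd hx Sum.inr_ne_inl
    · exact hbw
  obtain ⟨a, ha⟩ := hreal ⟨m - 1, by omega⟩ (by simp only [Ne, Fin.ext_iff]; omega)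
  refine false_of_no_common_adj hmax hno hP6 (c := c) a.2 b.2 o.2
    ((exists_adj_iff_of_eq_inl_of_eq_inr e ha hm).mpr (by simp only [pathGraph_adj]; omega))
    hbm (fun w hw haw hbw => hcommon ⟨w, hw, fun p x hp hpx => ?_⟩)
    (fun w hw how => ?_) ((adj_iff_of_eq_inl_of_eq_inl e hb ho).mpr ?_) (fun h => ?_)
    (fun h => ?_) (val_ne_of_eq_inl_of_eq_inl e ha hb ?_) (val_ne_of_eq_inl_of_eq_inl e ha ho ?_)
  · obtain hx | rfl := hnbr hp hpx
    exacts [Sum.inl_injective (ha.symm.trans hx) ▸ haw, hbw]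
  · have := (exists_adj_iff_of_eq_inl_of_eq_inr e ho hm).mp ⟨w, hw, how⟩
    simp only [pathGraph_adj] at this
    omega
  · simp [pathGraph_adj]
  · have := (adj_iff_of_eq_inl_of_eq_inl e ha hb).mp h
    simp only [pathGraph_adj] at this
    omega
  · have := (adj_iff_of_eq_inl_of_eq_inl e ha ho).mp h
    simp only [pathGraph_adj] at this
    omega
  all_goals simp only [Ne, Fin.ext_iff]; omega

theorem false_of_two_contracted_start {k : ℕ} {v : Fin k → V} (htri : IsTripod G A k v)
    (hP6 : IsEmpty (pathGraph 6 ↪g G)) (e : pathGraph 6 ↪g contractTripod G A) {i j : Fin 3}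
    (hi : e 0 = .inr i) (hj : e 1 = .inr j) (hreal : ∀ r : Fin 6, 2 ≤ (r : ℕ) → ∃ a, e r = .inl a) :
    False := by
  have hij : i ≠ j := by
    rintro rfl
    exact absurd (e.injective (hi.trans hj.symm)) (by decide)
  have hpos {r : Fin 6} {c : Fin 3} (hr : e r = .inr c) : r = 0 ∧ c = i ∨ r = 1 ∧ c = j := by
    by_cases h2 : 2 ≤ (r : ℕ)
    · obtain ⟨a, ha⟩ := hreal r h2
      exact absurd (ha.symm.trans hr) Sum.inl_ne_inr
    · obtain rfl | rfl : r = 0 ∨ r = 1 := by omega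
      exacts [.inl ⟨rfl, Sum.inr_injective (hr.symm.trans hi)⟩,
        .inr ⟨rfl, Sum.inr_injective (hr.symm.trans hj)⟩]
  obtain ⟨a, ha⟩ := hreal 2 le_rfl
  obtain ⟨w', hw', haw'⟩ := (exists_adj_iff_of_eq_inl_of_eq_inr e ha hj).mpr
    (by simp [pathGraph_adj])
  obtain ⟨w, hw, hw'w⟩ := htri.exists_adj hij.symm hw'
  set φ := Function.update (Function.update htri.root i w) j w'
  have hφi : φ i = w := by simp [φ, hij]
  have hφj : φ j = w' := by simp [φ]
  have hφ (c : Fin 3) : φ c ∈ A c := by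
    rcases eq_or_ne c j with rfl | hcj
    · rwa [hφj]
    rcases eq_or_ne c i with rfl | hci
    · rwa [hφi]
    simpa [φ, hci, hcj] using htri.root_mem c
  refine hP6.false
    (nonempty_embedding_of_representatives e (fun _ _ => htri.disjoint) hφ ?_ ?_).some
  · intro p q x c hpq hp hq
    rw [pathGraph_adj] at hpq
    rcases hpos hq with ⟨rfl, rfl⟩ | ⟨rfl, rfl⟩
    · obtain rfl : p = 1 := by omega
      exact absurd (hp.symm.trans hj) Sum.inl_ne_inr
    · obtain rfl | rfl : p = 0 ∨ p = 2 := by omega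
      · exact absurd (hp.symm.trans hi) Sum.inl_ne_inr
      · rwa [Sum.inl_injective (hp.symm.trans ha), hφj]
  · intro p q c d hpq hp hq
    rcases hpos hp with ⟨rfl, rfl⟩ | ⟨rfl, rfl⟩ <;> rcases hpos hq with ⟨rfl, rfl⟩ | ⟨rfl, rfl⟩
    · exact absurd hpq (pathGraph 6).irrefl
    · rw [hφi, hφj]
      exact hw'w.symm
    · rw [hφi, hφj]
      exact hw'w
    · exact absurd hpq (pathGraph 6).irrefl

theorem exists_pathGraph_embedding_adj_iff_of_two_contracted {k : ℕ} {v : Fin k → V}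
    (htri : IsTripod G A k v) (e : pathGraph 6 ↪g contractTripod G A) {p q r₁ r₂ : Fin 6}
    {i j : Fin 3} (hr₁ : (r₁ : ℕ) + 1 = p) (hpq : (p : ℕ) + 1 = q) (hr₂ : (q : ℕ) + 1 = r₂)
    (hi : e p = .inr i) (hj : e q = .inr j) {a b : {x : V // x ∉ ⋃ i, A i}}
    (ha : e r₁ = .inl a) (hb : e r₂ = .inl b) :
    ∃ n, 1 ≤ n ∧ ∃ U : pathGraph (n + 1) ↪g G, (∀ t, U t ∈ A i ∪ A j) ∧
      ∀ r x t, e r = .inl x → (G.Adj x (U t) ↔ r = r₁ ∧ t = 0 ∨ r = r₂ ∧ t = Fin.last n) := by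
  have hij : i ≠ j := by
    rintro rfl
    have := congrArg Fin.val (e.injective (hi.trans hj.symm))
    omega
  obtain ⟨wa, hwa, haw⟩ := (exists_adj_iff_of_eq_inl_of_eq_inr e ha hi).mpr
    (pathGraph_adj.mpr (.inl hr₁))
  obtain ⟨wb, hwb, hbw⟩ := (exists_adj_iff_of_eq_inl_of_eq_inr e hb hj).mpr
    (pathGraph_adj.mpr (.inr hr₂))
  obtain ⟨n, U, hUB, hUa, hUb⟩ :=
    htri.exists_pathGraph_embedding_adj_iff hij ⟨wa, .inl hwa, haw⟩ ⟨wb, .inr hwb, hbw⟩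
  have hside {r : Fin 6} {x} (hr : e r = .inl x) {t : Fin (n + 1)} (h : G.Adj x (U t)) :
      U t ∈ A i ∧ r = r₁ ∧ x = a ∨ U t ∈ A j ∧ r = r₂ ∧ x = b := by
    have hrp : r ≠ p := fun h => by rw [h, hi] at hr; exact Sum.inr_ne_inl hr
    have hrq : r ≠ q := fun h => by rw [h, hj] at hr; exact Sum.inr_ne_inl hr
    rcases hUB t with hU | hU
    · have := pathGraph_adj.mp ((exists_adj_iff_of_eq_inl_of_eq_inr e hr hi).mp ⟨_, hU, h⟩)
      obtain rfl : r = r₁ := by omega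
      exact .inl ⟨hU, rfl, Sum.inl_injective (hr.symm.trans ha)⟩
    · have := pathGraph_adj.mp ((exists_adj_iff_of_eq_inl_of_eq_inr e hr hj).mp ⟨_, hU, h⟩)
      obtain rfl : r = r₂ := by omega
      exact .inr ⟨hU, rfl, Sum.inl_injective (hr.symm.trans hb)⟩
  have hr₁₂ : r₁ ≠ r₂ := by omega
  refine ⟨n, ?_, U, hUB, fun r x t hr => ⟨fun h => ?_, ?_⟩⟩
  · by_contra! hn
    interval_cases n
    obtain ⟨hUi, -⟩ | ⟨-, h, -⟩ := hside ha ((hUa 0).mpr rfl)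
    · obtain ⟨-, h, -⟩ | ⟨hUj, -⟩ := hside hb ((hUb 0).mpr rfl)
      · exact hr₁₂ h.symm
      · exact Set.disjoint_left.mp (htri.disjoint hij) hUi hUj
    · exact hr₁₂ h
  · obtain ⟨-, rfl, rfl⟩ | ⟨-, rfl, rfl⟩ := hside hr h
    exacts [.inl ⟨rfl, (hUa t).mp h⟩, .inr ⟨rfl, (hUb t).mp h⟩]
  · rintro (⟨rfl, rfl⟩ | ⟨rfl, rfl⟩)
    · rw [Sum.inl_injective (hr.symm.trans ha)]
      exact (hUa 0).mpr rfl
    · rw [Sum.inl_injective (hr.symm.trans hb)]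
      exact (hUb _).mpr rfl

theorem false_of_two_contracted_middle {k : ℕ} {v : Fin k → V} (htri : IsTripod G A k v)
    (hP6 : IsEmpty (pathGraph 6 ↪g G)) (e : pathGraph 6 ↪g contractTripod G A) {p q : Fin 6}
    {i j : Fin 3} (hp1 : 1 ≤ (p : ℕ)) (hpq : (p : ℕ) + 1 = q) (hq4 : (q : ℕ) ≤ 4)
    (hi : e p = .inr i) (hj : e q = .inr j) (hreal : ∀ r, r ≠ p → r ≠ q → ∃ a, e r = .inl a) :
    False := by
  have hreal' (r : ℕ) (hr : r < 6) (hrp : r ≠ p) (hrq : r ≠ q) : ∃ a, e ⟨r, hr⟩ = .inl a :=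
    hreal _ (by simp only [Ne, Fin.ext_iff]; omega) (by simp only [Ne, Fin.ext_iff]; omega)
  obtain ⟨a, ha⟩ := hreal' (p - 1) (by omega) (by omega) (by omega)
  obtain ⟨b, hb⟩ := hreal' (q + 1) (by omega) (by omega) (by omega)
  obtain ⟨n, hn, U, hUB, hU⟩ := exists_pathGraph_embedding_adj_iff_of_two_contracted htri e
    (show p - 1 + 1 = (p : ℕ) by omega) hpq rfl hi hj ha hb
  obtain ⟨P, hP⟩ := exists_segment_embedding e 0 p (by omega)
    fun r => hreal' _ _ (by omega) (by omega)
  obtain ⟨Q, hQ⟩ := exists_segment_embedding e (q + 1) (5 - q) (by omega)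
    fun r => hreal' _ _ (by omega) (by omega)
  have hUreal {x : V} (hx : x ∉ ⋃ c, A c) (t : Fin (n + 1)) : x ≠ U t := by
    rintro rfl
    exact (hUB t).elim (fun h => hx (Set.mem_iUnion.mpr ⟨i, h⟩))
      fun h => hx (Set.mem_iUnion.mpr ⟨j, h⟩)
  refine (isEmpty_pathGraph_embedding_of_le hP6 (by omega : 6 ≤ p + (n + 1) + (5 - q))).false
    (nonempty_pathGraph_embedding_append₃ P U Q (fun r t => hUreal (hP r).1 t)
      (fun r t => (hU _ _ t (hP r).2).trans ?_) (fun t s => (hUreal (hQ s).1 t).symm)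
      (fun t s => G.adj_comm _ _ |>.trans <| (hU _ _ t (hQ s).2).trans ?_)
      (fun r s => val_ne_of_eq_inl_of_eq_inl e (hP r).2 (hQ s).2 ?_) (fun r s h => ?_)).some
  · simp only [Fin.ext_iff, Fin.val_zero, Fin.val_last]
    omega
  · simp only [Fin.ext_iff, Fin.val_zero, Fin.val_last]
    omega
  · simp only [Ne, Fin.ext_iff]
    omega
  · have := (adj_iff_of_eq_inl_of_eq_inl e (hP r).2 (hQ s).2).mp h
    simp only [pathGraph_adj] at this
    omega

theorem false_of_two_contracted {k : ℕ} {v : Fin k → V} (htri : IsTripod G A k v)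
    (hP6 : IsEmpty (pathGraph 6 ↪g G)) (e : pathGraph 6 ↪g contractTripod G A) {p q : Fin 6}
    {i j : Fin 3} (hpq : (p : ℕ) + 1 = q) (hp : e p = .inr i) (hq : e q = .inr j)
    (hreal : ∀ r, r ≠ p → r ≠ q → ∃ a, e r = .inl a) : False := by
  wlog hp2 : (p : ℕ) ≤ 2 generalizing e p q i j
  · refine this (e.comp (pathGraphRevIso 6).toEmbedding) (p := q.rev) (q := p.rev)
      (by simp only [Fin.val_rev]; omega) (by simpa using hq) (by simpa using hp)
      (fun r hrq hrp => ?_) (by simp only [Fin.val_rev]; omega)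
    simpa using hreal r.rev (by rintro rfl; simp at hrp) (by rintro rfl; simp at hrq)
  rcases Nat.eq_zero_or_pos p with hp0 | hp0
  · obtain rfl : p = 0 := Fin.ext hp0
    obtain rfl : q = 1 := by omega
    exact false_of_two_contracted_start htri hP6 e hp hq fun r hr => hreal r (by omega) (by omega)
  · exact false_of_two_contracted_middle htri hP6 e hp0 hpq (by omega) hp hq hreal

end contractTripod

/-- If `G` is `P₆`-free and `(A 0, A 1, A 2)` is a maximal tripod such that no
vertex of `G` has neighbors in all three classes, then the graph obtained from
`G` by contracting the tripod is `P₆`-free. -/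
theorem contractTripod_P6_free {V : Type*} (G : SimpleGraph V)
    (A : Fin 3 → Set V) (hmax : MaximalTripod G A)
    (hno : ∀ x : V, x ∉ (⋃ i, A i) → ¬ ∀ i : Fin 3, ∃ w ∈ A i, G.Adj x w)
    (hP6 : IsEmpty (SimpleGraph.pathGraph 6 ↪g G)) :
    IsEmpty (SimpleGraph.pathGraph 6 ↪g contractTripod G A) := by
  obtain ⟨k, v, htri⟩ := hmax.1
  refine ⟨fun e => ?_⟩
  rcases contractTripod.pathGraph_embedding_cases e with hreal | ⟨m, c, hm, hreal⟩ |
    ⟨p, q, i, j, hpq, hp, hq, hreal⟩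
  · obtain ⟨f, -⟩ := contractTripod.exists_embedding_of_forall_eq_inl e hreal
    exact hP6.false f
  · exact contractTripod.false_of_one_contracted hmax hno hP6 e hm hreal
  · exact contractTripod.false_of_two_contracted htri hP6 e hpq hp hq hreal
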